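/- arXiv:math/0610346 — 3 statements merged into one kernel-verified Lean document; each statement's English description precedes it below -/
import Mathlib

section
/- Let n ≥ 2, let O be a nonempty bounded open subset of ℝⁿ, let V be a finite-dimensional real inner product space, and let p be a real number with 1 < p < n. Then there exists a constant κ > 0, depending only on O, V, n and p (in particular NOT on the connection form A below), with the following property: for every continuous map A : ℝⁿ → (ℝⁿ →L (V →L V)) such that the operator A x v : V → V is skew-adjoint for every x ∈ ℝⁿ and v ∈ ℝⁿ, and for every continuously differentiable map f : ℝⁿ → V whose (topological) support is compact and contained in O, one has (∫ ‖f(x)‖^p dx)^{1/p} ≤ κ · (∫ ‖∇_A f(x)‖^p dx)^{1/p}, where ∇_A f(x) denotes the linear map v ↦ (fderiv f x)(v) + (A x v)(f x) from ℝⁿ to V and ‖∇_A f(x)‖ is its operator norm. -/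
open MeasureTheory
open scoped RealInnerProductSpace
open Filter
open scoped NNReal ENNReal Topology

set_option maxHeartbeats 1000000

/-- Sobolev–Poincaré inequality for metric-compatible connections `∇_A = d + A` on the
trivial bundle over a bounded open set `O ⊆ ℝⁿ`, with constant independent of `A`. -/
theorem sobolev_poincare_coulomb
    (n : ℕ) (hn : 2 ≤ n) (O : Set (Fin n → ℝ))
    (hO : IsOpen O) (hObd : Bornology.IsBounded O) (hOne : O.Nonempty)
    (V : Type*) [NormedAddCommGroup V] [InnerProductSpace ℝ V] [FiniteDimensional ℝ V]
    (p : ℝ) (hp1 : 1 < p) (hpn : p < n) :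
    ∃ κ : ℝ, 0 < κ ∧
      ∀ A : (Fin n → ℝ) → ((Fin n → ℝ) →L[ℝ] (V →L[ℝ] V)),
        Continuous A →
        (∀ (x v : Fin n → ℝ) (u w : V), ⟪A x v u, w⟫ = - ⟪u, A x v w⟫) →
        ∀ f : (Fin n → ℝ) → V, ContDiff ℝ 1 f →
          HasCompactSupport f → tsupport f ⊆ O →
          (∫ x, ‖f x‖ ^ p) ^ (1 / p) ≤
            κ * (∫ x, ‖fderiv ℝ f x + (A x).flip (f x)‖ ^ p) ^ (1 / p) := by
  have hp0 : (0:ℝ) < p := lt_trans one_pos hp1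
  set μ : Measure (Fin n → ℝ) := volume with hμ
  set q : ℝ≥0 := p.toNNReal with hqdef
  have hqco : (q : ℝ) = p := Real.coe_toNNReal p hp0.le
  have hq1 : 1 ≤ q := by
    rw [← NNReal.coe_le_coe, hqco, NNReal.coe_one]; exact hp1.le
  have hfr : Module.finrank ℝ (Fin n → ℝ) = n := Module.finrank_fin_fun ℝ
  have hqn : q < Module.finrank ℝ (Fin n → ℝ) := by
    rw [hfr, ← NNReal.coe_lt_coe] at *
    push_cast
    rw [hqco]; exact hpn
  have hq0'' : (q : ℝ≥0∞) ≠ 0 := by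
    simp only [ne_eq, ENNReal.coe_eq_zero]
    intro h
    rw [h] at hqco; simp at hqco; linarith
  have hqtop : (q : ℝ≥0∞) ≠ ∞ := ENNReal.coe_ne_top
  have hqtr : ((q : ℝ≥0∞)).toReal = p := by simp [hqco]
  set C : ℝ≥0 := eLpNormLESNormFDerivOfLeConst ℝ μ O q q with hCdef
  refine ⟨(C:ℝ) + 1, by positivity, ?_⟩
  intro A hA hskew f hf h2f hsupp
  set D : (Fin n → ℝ) → ((Fin n → ℝ) →L[ℝ] V) := fun x => fderiv ℝ f x + (A x).flip (f x) with hD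
  -- continuity of D
  have hDc : Continuous D := by
    apply (hf.continuous_fderiv one_ne_zero).add
    have h1 : Continuous fun x => (A x).flip := (ContinuousLinearMap.flipₗᵢ ℝ (Fin n → ℝ) V V).continuous.comp hA
    exact h1.clm_apply hf.continuous
  have hDsupp : Function.support D ⊆ tsupport f := by
    intro x hx
    by_contra hxn
    apply hx
    have hfx : f x = 0 := image_eq_zero_of_notMem_tsupport hxn
    have hdfx : fderiv ℝ f x = 0 := by
      by_contra h
      exact hxn (support_fderiv_subset ℝ h)
    simp [hD, hfx, hdfx]
  have hDcs : HasCompactSupport D :=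
    HasCompactSupport.of_support_subset_isCompact h2f hDsupp
  -- Kato-type bound for the regularized norm, and Poincaré
  have key : ∀ ε : ℝ, 0 < ε →
      eLpNorm (fun x => Real.sqrt (‖f x‖^2 + ε^2) - ε) q μ ≤ (C : ℝ≥0∞) * eLpNorm D q μ := by
    intro ε hε
    set g : (Fin n → ℝ) → ℝ := fun x => Real.sqrt (‖f x‖^2 + ε^2) - ε with hg
    have hgpos : ∀ x, (0:ℝ) < ‖f x‖^2 + ε^2 := fun x => by positivity
    have hgc : ContDiff ℝ 1 g :=
      (((hf.norm_sq ℝ).add contDiff_const).sqrt (fun x => (hgpos x).ne')).sub contDiff_const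
    have hgfd : ∀ x, ‖fderiv ℝ g x‖ ≤ ‖D x‖ := by
      intro x
      have ht : (0:ℝ) < ‖f x‖^2 + ε^2 := hgpos x
      have hfd : HasFDerivAt f (fderiv ℝ f x) x := (hf.differentiable one_ne_zero x).hasFDerivAt
      have h1 : HasFDerivAt (fun y => ‖f y‖^2 + ε^2)
          (2 • (innerSL ℝ (f x)).comp (fderiv ℝ f x)) x := hfd.norm_sq.add_const _
      have h2 := (h1.sqrt ht.ne').sub_const ε
      rw [h2.fderiv]
      set t := Real.sqrt (‖f x‖^2 + ε^2) with htdef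
      have ht0 : 0 < t := Real.sqrt_pos.mpr ht
      have hft : ‖f x‖ ≤ t := by
        rw [htdef]
        calc ‖f x‖ = Real.sqrt (‖f x‖^2) := by rw [Real.sqrt_sq (norm_nonneg _)]
        _ ≤ _ := Real.sqrt_le_sqrt (by nlinarith)
      apply ContinuousLinearMap.opNorm_le_bound _ (norm_nonneg _)
      intro v
      have hkey : ⟪f x, fderiv ℝ f x v⟫ = ⟪f x, D x v⟫ := by
        have h0 : ⟪f x, A x v (f x)⟫ = 0 := by
          have := hskew x v (f x) (f x)
          rw [real_inner_comm] at this
          linarith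
        simp [hD, inner_add_right, h0]
      have hval : ‖((1 / (2 * t)) • (2 • (innerSL ℝ (f x)).comp (fderiv ℝ f x))) v‖
          = |⟪f x, fderiv ℝ f x v⟫| / t := by
        simp only [ContinuousLinearMap.smul_apply, ContinuousLinearMap.coe_smul',
          Pi.smul_apply, ContinuousLinearMap.comp_apply, innerSL_apply_apply, smul_eq_mul,
          norm_smul, Real.norm_eq_abs, norm_mul]
        rw [abs_of_pos (by positivity : (0:ℝ) < 1/(2*t))]
        field_simp
        rw [nsmul_eq_mul, Nat.cast_ofNat, abs_mul, abs_two]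
      rw [hval, hkey, div_le_iff₀ ht0]
      calc |⟪f x, D x v⟫| ≤ ‖f x‖ * ‖D x v‖ := abs_real_inner_le_norm _ _
        _ ≤ t * (‖D x‖ * ‖v‖) := by gcongr; exact ContinuousLinearMap.le_opNorm _ _
        _ = ‖D x‖ * ‖v‖ * t := by ring
    have hgsupp : Function.support g ⊆ O := by
      intro x hx
      refine hsupp (subset_tsupport f ?_)
      simp only [Function.mem_support] at hx ⊢
      intro hfx
      apply hx
      rw [hg]
      simp only [hfx, norm_zero]
      rw [zero_pow (by norm_num : (2:ℕ) ≠ 0), zero_add, Real.sqrt_sq hε.le, sub_self]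
    calc eLpNorm g q μ ≤ (C : ℝ≥0∞) * eLpNorm (fderiv ℝ g) q μ := by
          rw [hCdef]
          exact eLpNorm_le_eLpNorm_fderiv μ hgc hgsupp hq1 hqn hObd
      _ ≤ (C : ℝ≥0∞) * eLpNorm D q μ := by
          gcongr
          exact eLpNorm_mono (fun x => by simpa using hgfd x)
  -- bound on lintegrals of regularized norms
  have hbound : ∀ ε : ℝ, 0 < ε →
      ∫⁻ x, ENNReal.ofReal ((Real.sqrt (‖f x‖^2 + ε^2) - ε)^p) ∂μ
        ≤ ((C : ℝ≥0∞) * eLpNorm D q μ)^p := by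
    intro ε hε
    have hgnn : ∀ x, 0 ≤ Real.sqrt (‖f x‖^2 + ε^2) - ε := by
      intro x
      have h1 := Real.sqrt_le_sqrt (show ε^2 ≤ ‖f x‖^2 + ε^2 by nlinarith)
      rw [Real.sqrt_sq hε.le] at h1
      linarith
    have heq : eLpNorm (fun x => Real.sqrt (‖f x‖^2 + ε^2) - ε) q μ
        = (∫⁻ x, ENNReal.ofReal ((Real.sqrt (‖f x‖^2 + ε^2) - ε)^p) ∂μ) ^ (1/p) := by
      rw [eLpNorm_eq_lintegral_rpow_enorm_toReal hq0'' hqtop, hqtr]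
      congr 1
      apply lintegral_congr
      intro x
      rw [← ofReal_norm_eq_enorm, Real.norm_of_nonneg (hgnn x),
        ← ENNReal.ofReal_rpow_of_nonneg (hgnn x) hp0.le]
    calc ∫⁻ x, ENNReal.ofReal ((Real.sqrt (‖f x‖^2 + ε^2) - ε)^p) ∂μ
        = ((∫⁻ x, ENNReal.ofReal ((Real.sqrt (‖f x‖^2 + ε^2) - ε)^p) ∂μ) ^ (1/p))^p := by
          rw [← ENNReal.rpow_mul, one_div, inv_mul_cancel₀ hp0.ne', ENNReal.rpow_one]
      _ = (eLpNorm (fun x => Real.sqrt (‖f x‖^2 + ε^2) - ε) q μ)^p := by rw [heq]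
      _ ≤ _ := ENNReal.rpow_le_rpow (key ε hε) hp0.le
  -- Fatou-type limit
  have hrpc : Continuous fun y : ℝ => y ^ p :=
    continuous_iff_continuousAt.mpr fun x => Real.continuousAt_rpow_const x p (Or.inr hp0.le)
  have hflim : ∫⁻ x, ENNReal.ofReal (‖f x‖^p) ∂μ ≤ ((C:ℝ≥0∞) * eLpNorm D q μ)^p := by
    have hεk : ∀ k : ℕ, (0:ℝ) < 1/(k+1) := fun k => by positivity
    have hptw : ∀ x, Tendsto (fun k : ℕ =>
        ENNReal.ofReal ((Real.sqrt (‖f x‖^2 + ((1:ℝ)/(k+1))^2) - 1/(k+1))^p)) atTop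
        (𝓝 (ENNReal.ofReal (‖f x‖^p))) := by
      intro x
      have h0 : Tendsto (fun k : ℕ => (1:ℝ)/(k+1)) atTop (𝓝 0) :=
        tendsto_one_div_add_atTop_nhds_zero_nat
      have hc : Continuous fun ε : ℝ => ENNReal.ofReal ((Real.sqrt (‖f x‖^2 + ε^2) - ε)^p) := by
        apply ENNReal.continuous_ofReal.comp
        apply hrpc.comp
        exact (Real.continuous_sqrt.comp (continuous_const.add (continuous_pow 2))).sub continuous_id
      have h2 := (hc.tendsto 0).comp h0
      simp only [Function.comp_def] at h2
      simpa [Real.sqrt_sq (norm_nonneg (f x)), inv_pow] using h2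
    calc ∫⁻ x, ENNReal.ofReal (‖f x‖^p) ∂μ
        = ∫⁻ x, liminf (fun k : ℕ =>
            ENNReal.ofReal ((Real.sqrt (‖f x‖^2 + ((1:ℝ)/(k+1))^2) - 1/(k+1))^p)) atTop ∂μ :=
          lintegral_congr fun x => ((hptw x).liminf_eq).symm
      _ ≤ liminf (fun k : ℕ => ∫⁻ x,
            ENNReal.ofReal ((Real.sqrt (‖f x‖^2 + ((1:ℝ)/(k+1))^2) - 1/(k+1))^p) ∂μ) atTop := by
          apply lintegral_liminf_le
          intro k
          apply Continuous.measurable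
          apply ENNReal.continuous_ofReal.comp
          apply hrpc.comp
          exact (Real.continuous_sqrt.comp ((hf.continuous.norm.pow 2).add continuous_const)).sub continuous_const
      _ ≤ ((C:ℝ≥0∞) * eLpNorm D q μ)^p := by
          have h1 := Filter.liminf_le_liminf
            (Filter.Eventually.of_forall fun k : ℕ => hbound _ (hεk k))
            (f := atTop (α := ℕ))
          simpa using h1
  have hmain : eLpNorm f q μ ≤ (C:ℝ≥0∞) * eLpNorm D q μ := by
    have heqf : eLpNorm f q μ = (∫⁻ x, ENNReal.ofReal (‖f x‖^p) ∂μ)^(1/p) := by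
      rw [eLpNorm_eq_lintegral_rpow_enorm_toReal hq0'' hqtop, hqtr]
      congr 1
      apply lintegral_congr; intro x
      rw [← ofReal_norm_eq_enorm, ← ENNReal.ofReal_rpow_of_nonneg (norm_nonneg _) hp0.le]
    rw [heqf]
    calc (∫⁻ x, ENNReal.ofReal (‖f x‖^p) ∂μ)^(1/p)
        ≤ (((C:ℝ≥0∞) * eLpNorm D q μ)^p)^(1/p) := ENNReal.rpow_le_rpow hflim (by positivity)
      _ = (C:ℝ≥0∞) * eLpNorm D q μ := by
          rw [← ENNReal.rpow_mul, mul_one_div, div_self hp0.ne', ENNReal.rpow_one]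
  -- convert to Bochner integrals
  have hfm : MemLp f (q:ℝ≥0∞) μ := hf.continuous.memLp_of_hasCompactSupport h2f
  have hDm : MemLp D (q:ℝ≥0∞) μ := hDc.memLp_of_hasCompactSupport hDcs
  rw [hfm.eLpNorm_eq_integral_rpow_norm hq0'' hqtop,
    hDm.eLpNorm_eq_integral_rpow_norm hq0'' hqtop, hqtr] at hmain
  have hR : (0:ℝ) ≤ (∫ x, ‖D x‖^p ∂μ)^p⁻¹ :=
    Real.rpow_nonneg (integral_nonneg fun x => Real.rpow_nonneg (norm_nonneg _) p) _
  rw [← ENNReal.ofReal_coe_nnreal, ← ENNReal.ofReal_mul C.coe_nonneg] at hmain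
  have hfin := (ENNReal.ofReal_le_ofReal_iff (mul_nonneg C.coe_nonneg hR)).mp hmain
  simp only [one_div]
  calc (∫ x, ‖f x‖^p ∂μ)^p⁻¹ ≤ (C:ℝ) * (∫ x, ‖D x‖^p ∂μ)^p⁻¹ := hfin
    _ ≤ ((C:ℝ)+1) * (∫ x, ‖D x‖^p ∂μ)^p⁻¹ := by nlinarith [hR]
end

section
/- Let V be a real inner product space, let f : ℝⁿ → V be differentiable at a point x₀ with f(x₀) ≠ 0, and let A : ℝⁿ →L (V →L V) be a continuous linear map such that A v : V → V is skew-adjoint for every v ∈ ℝⁿ. Then the function x ↦ ‖f(x)‖ is differentiable at x₀, and for every v ∈ ℝⁿ one has |(fderiv (fun x => ‖f x‖) x₀)(v)| ≤ ‖(fderiv f x₀)(v) + (A v)(f x₀)‖. -/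
/-!
Away from zeros of `f`, `d‖f‖(v) = ⟪f, df(v)⟫ / ‖f‖`. Skew-adjointness of `A v` gives
`⟪f, A v f⟫ = 0`, so `df(v)` may be replaced by `df(v) + A v f` in this inner product, and
Cauchy–Schwarz finishes.
-/

open scoped RealInnerProductSpace

section NormDeriv

variable {E V : Type*} [NormedAddCommGroup E] [NormedSpace ℝ E]
  [NormedAddCommGroup V] [InnerProductSpace ℝ V] {f : E → V} {f' : E →L[ℝ] V} {x : E}

theorem HasFDerivAt.norm_of_ne_zero (hf : HasFDerivAt f f' x) (h0 : f x ≠ 0) :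
    HasFDerivAt (‖f ·‖) (‖f x‖⁻¹ • (innerSL ℝ (f x)).comp f') x := by
  have hsqrt := hf.norm_sq.sqrt (pow_ne_zero 2 (norm_ne_zero_iff.mpr h0))
  simp only [Real.sqrt_sq (norm_nonneg _)] at hsqrt
  convert hsqrt using 1
  ext w
  have hx : ‖f x‖ ≠ 0 := norm_ne_zero_iff.mpr h0
  simp only [smul_apply, ContinuousLinearMap.comp_apply, coe_innerSL_apply, smul_eq_mul,
    nsmul_eq_mul, Nat.cast_ofNat]
  field_simp

theorem abs_fderiv_norm_le_norm_add (hf : DifferentiableAt ℝ f x) (h0 : f x ≠ 0) (v : E)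
    {w : V} (hw : ⟪f x, w⟫ = 0) :
    |fderiv ℝ (‖f ·‖) x v| ≤ ‖fderiv ℝ f x v + w‖ := by
  have hpos : 0 < ‖f x‖ := norm_pos_iff.mpr h0
  have hval : fderiv ℝ (‖f ·‖) x v = ‖f x‖⁻¹ * ⟪f x, fderiv ℝ f x v + w⟫ := by
    simp [(hf.hasFDerivAt.norm_of_ne_zero h0).fderiv, inner_add_right, hw]
  calc |fderiv ℝ (‖f ·‖) x v|
      = ‖f x‖⁻¹ * |⟪f x, fderiv ℝ f x v + w⟫| := by
        rw [hval, abs_mul, abs_of_pos (inv_pos.mpr hpos)]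
    _ ≤ ‖f x‖⁻¹ * (‖f x‖ * ‖fderiv ℝ f x v + w‖) := by
        gcongr
        exact abs_real_inner_le_norm _ _
    _ = ‖fderiv ℝ f x v + w‖ := by field_simp

end NormDeriv

theorem real_inner_self_apply_eq_zero_of_skew {V : Type*} [NormedAddCommGroup V]
    [InnerProductSpace ℝ V] {T : V → V} (hT : ∀ u w, ⟪T u, w⟫ = -⟪u, T w⟫) (u : V) :
    ⟪u, T u⟫ = 0 := by
  have := hT u u
  rw [real_inner_comm] at this
  linarith

/-- Pointwise Kato inequality: for a connection `∇_A = d + A` compatible with the fiber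
metric (each `A v` skew-adjoint), the norm `‖f‖` is differentiable where `f ≠ 0`, and its
derivative is dominated direction-by-direction by the covariant derivative of `f`. -/
theorem kato_pointwise
    (n : ℕ) (V : Type*) [NormedAddCommGroup V] [InnerProductSpace ℝ V]
    (f : (Fin n → ℝ) → V) (x₀ : Fin n → ℝ)
    (hf : DifferentiableAt ℝ f x₀) (hf0 : f x₀ ≠ 0)
    (A : (Fin n → ℝ) →L[ℝ] (V →L[ℝ] V))
    (hA : ∀ (v : Fin n → ℝ) (u w : V), ⟪A v u, w⟫ = - ⟪u, A v w⟫) :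
    DifferentiableAt ℝ (fun x => ‖f x‖) x₀ ∧
      ∀ v : Fin n → ℝ,
        |fderiv ℝ (fun x => ‖f x‖) x₀ v| ≤ ‖fderiv ℝ f x₀ v + A v (f x₀)‖ :=
  ⟨hf.norm ℝ hf0, fun v =>
    abs_fderiv_norm_le_norm_add hf hf0 v (real_inner_self_apply_eq_zero_of_skew (hA v) (f x₀))⟩
end

section
/- Let n ∈ ℕ with n ≥ 1, and let G : ℝ → Matrix (Fin (n+1)) (Fin (n+1)) ℝ be a matrix-valued function each of whose entries is differentiable at 0. Write 'last' for the last index of Fin (n+1). Assume: (i) G t last last = 1 for all t; (ii) G 0 last k = 0 for every k ≠ last; (iii) G 0 k last = 0 for every k ≠ last. Then the derivative at 0 of t ↦ det (G t) equals the derivative at 0 of t ↦ det ((G t).submatrix Fin.castSucc Fin.castSucc), i.e., of the determinant of the submatrix obtained from G t by deleting the last row and the last column. -/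
open Matrix

lemma diffAt_det_aux {m : ℕ} (M : ℝ → Matrix (Fin m) (Fin m) ℝ)
    (h : ∀ i j, DifferentiableAt ℝ (fun t => M t i j) 0) :
    DifferentiableAt ℝ (fun t => (M t).det) 0 := by
  simp only [Matrix.det_apply']
  exact DifferentiableAt.fun_sum fun σ _ =>
    ((DifferentiableAt.fun_finsetProd fun i _ => h (σ i) i).const_mul _)

/-- On the boundary, `∂ₜ det G = ∂ₜ det G(n|n)`: if `G t` has last diagonal entry `1` for all
`t` and the remaining last row and column vanish at `t = 0`, then the derivative at `0` of
`det (G t)` equals that of the determinant of the submatrix deleting the last row and column. -/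
theorem deriv_det_eq_deriv_det_submatrix
    (n : ℕ) (hn : 1 ≤ n) (G : ℝ → Matrix (Fin (n + 1)) (Fin (n + 1)) ℝ)
    (hG : ∀ i j, DifferentiableAt ℝ (fun t => G t i j) 0)
    (h1 : ∀ t, G t (Fin.last n) (Fin.last n) = 1)
    (h2 : ∀ k, k ≠ Fin.last n → G 0 (Fin.last n) k = 0)
    (h3 : ∀ k, k ≠ Fin.last n → G 0 k (Fin.last n) = 0) :
    deriv (fun t => (G t).det) 0 =
      deriv (fun t => ((G t).submatrix Fin.castSucc Fin.castSucc).det) 0 := by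
  set L := Fin.last n with hL
  have hdsub : ∀ j : Fin (n+1),
      DifferentiableAt ℝ (fun t => ((G t).submatrix L.succAbove j.succAbove).det) 0 :=
    fun j => diffAt_det_aux _ (fun i k => hG _ _)
  have hdterm : ∀ j : Fin (n+1), DifferentiableAt ℝ
      (fun t => (-1:ℝ)^((L:ℕ)+(j:ℕ)) * G t L j * ((G t).submatrix L.succAbove j.succAbove).det) 0 :=
    fun j => (((hG L j).const_mul _).mul (hdsub j))
  have step1 : deriv (fun t => (G t).det) 0 =
      ∑ j : Fin (n+1), deriv
        (fun t => (-1:ℝ)^((L:ℕ)+(j:ℕ)) * G t L j *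
          ((G t).submatrix L.succAbove j.succAbove).det) 0 := by
    rw [← deriv_fun_sum (fun j _ => hdterm j)]
    congr 1
    ext t
    exact Matrix.det_succ_row (G t) L
  rw [step1]
  have hterm : ∀ j : Fin (n+1), deriv
      (fun t => (-1:ℝ)^((L:ℕ)+(j:ℕ)) * G t L j *
        ((G t).submatrix L.succAbove j.succAbove).det) 0 =
      if j = L then deriv (fun t => ((G t).submatrix Fin.castSucc Fin.castSucc).det) 0 else 0 := by
    intro j
    by_cases hj : j = L
    · subst hj
      simp only [if_true]
      have hcoef : (-1:ℝ)^((L:ℕ)+(L:ℕ)) = 1 := by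
        have : Even ((L:ℕ)+(L:ℕ)) := ⟨L, rfl⟩
        exact this.neg_one_pow
      congr 1
      ext t
      rw [h1 t, hcoef, Fin.succAbove_last]
      ring
    · rw [if_neg hj]
      have heq : (fun t => (-1:ℝ)^((L:ℕ)+(j:ℕ)) * G t L j *
          ((G t).submatrix L.succAbove j.succAbove).det) =
          fun t => (-1:ℝ)^((L:ℕ)+(j:ℕ)) * (G t L j *
          ((G t).submatrix L.succAbove j.succAbove).det) := by
        ext t; ring
      rw [heq, deriv_const_mul _ ((hG L j).fun_mul (hdsub j)),
        deriv_fun_mul (hG L j) (hdsub j)]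
      have hf0 : G 0 L j = 0 := h2 j hj
      have hg0 : ((G 0).submatrix L.succAbove j.succAbove).det = 0 := by
        obtain ⟨i, hi⟩ := Fin.exists_succAbove_eq (Ne.symm hj)
        refine Matrix.det_eq_zero_of_column_eq_zero i (fun k => ?_)
        simp only [Matrix.submatrix_apply, hi]
        exact h3 _ (Fin.succAbove_ne L k)
      rw [hf0, hg0]
      ring
  simp only [hterm]
  simp
end
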